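/- Let p : D → C be a coCartesian fibration of ∞-categories and x an object of C. Then the canonical functor from the fiber p⁻¹(x) to the slice D ×_C C_{/x} (equivalently, for each object over x, comparing the fiber inclusion to the comma category) is cofinal. -/

import Mathlib

open CategoryTheory

universe v u

variable {C : Type u} [Category.{v} C]

/-- For a coCartesian fibration, modeled as the Grothendieck construction
`Grothendieck F → C` of a functor `F : C ⥤ Cat`, and an object `x : C`, the canonical
functor from the fiber `F.obj x = p⁻¹(x)` to the slice `D ×_C C_{/x}`, sending `d` to
`(d, 𝟙 x)`. -/
def fiberToSlice (F : C ⥤ Cat) (x : C) :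
    F.obj x ⥤ CostructuredArrow (Grothendieck.forget F) x where
  obj d := CostructuredArrow.mk (Y := (Grothendieck.ι F x).obj d)
    (𝟙 x : (Grothendieck.forget F).obj ((Grothendieck.ι F x).obj d) ⟶ x)
  map {d d'} f := CostructuredArrow.homMk ((Grothendieck.ι F x).map f) (by
    simp [Grothendieck.ι]; exact Category.id_comp _)
  map_id d := by
    apply CostructuredArrow.hom_ext
    exact (Grothendieck.ι F x).map_id d
  map_comp {X Y Z} f g := by
    apply CostructuredArrow.hom_ext
    exact (Grothendieck.ι F x).map_comp f g

/-!
The fiber inclusion `F.obj x ⥤ D ×_C C_{/x}` is a right adjoint, hence final. Its left adjoint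
is coCartesian pushforward `(a, f : p a ⟶ x) ↦ f_! a`: a morphism `a ⟶ d` over `f` into an
object `d` of the fiber factors uniquely as the coCartesian lift `a ⟶ f_! a` followed by a
morphism of the fiber, so `(f_! a, a ⟶ f_! a)` is initial in the comma category under `(a, f)`.
-/

open Limits

namespace CategoryTheory.Grothendieck

variable {F : C ⥤ Cat}

lemma toTransport_comp_ι_map {X : Grothendieck F} {c : C} (f : X.base ⟶ c) {d : F.obj c}
    (φ : (F.map f).toFunctor.obj X.fiber ⟶ d) :
    X.toTransport f ≫ (ι F c).map φ = (⟨f, φ⟩ : X ⟶ (ι F c).obj d) := by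
  fapply Grothendieck.ext
  · erw [comp_base]
    exact Category.comp_id f
  · erw [comp_fiber]
    simp only [ι, toTransport_fiber]
    erw [(F.map (𝟙 c)).toFunctor.map_id, Category.id_comp, eqToHom_trans_assoc,
      eqToHom_trans_assoc]
    exact Category.id_comp φ

lemma toTransport_comp_ι_map_of_base_eq {X : Grothendieck F} {c : C} {d : F.obj c}
    (h : X ⟶ (ι F c).obj d) {f : X.base ⟶ c} (hf : h.base = f) :
    X.toTransport f ≫ (ι F c).map (eqToHom (by rw [hf]; rfl) ≫ h.fiber) = h := by
  obtain ⟨b, φ⟩ := h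
  dsimp at hf ⊢
  subst hf
  exact (congrArg _ (congrArg _ (Category.id_comp φ))).trans (toTransport_comp_ι_map b φ)

lemma toTransport_comp_ι_map_injective {X : Grothendieck F} {c : C} (f : X.base ⟶ c)
    {d : F.obj c} {φ ψ : (F.map f).toFunctor.obj X.fiber ⟶ d}
    (h : X.toTransport f ≫ (ι F c).map φ = X.toTransport f ≫ (ι F c).map ψ) : φ = ψ := by
  rw [toTransport_comp_ι_map, toTransport_comp_ι_map] at h
  exact eq_of_heq (Hom.mk.inj h).2

end CategoryTheory.Grothendieck

namespace fiberToSlice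

variable (F : C ⥤ Cat) (x : C) (A : CostructuredArrow (Grothendieck.forget F) x)

lemma base_eq (B : StructuredArrow A (fiberToSlice F x)) : B.hom.left.base = A.hom :=
  (Category.comp_id _).symm.trans (CostructuredArrow.w B.hom)

def pushforward : StructuredArrow A (fiberToSlice F x) :=
  StructuredArrow.mk (Y := (F.map A.hom).toFunctor.obj A.left.fiber)
    (CostructuredArrow.homMk (A.left.toTransport A.hom) (Category.comp_id _))

def isInitialPushforward : IsInitial (pushforward F x A) :=
  IsInitial.ofUniqueHom
    (fun B => StructuredArrow.homMk (eqToHom (by rw [base_eq]; rfl) ≫ B.hom.left.fiber)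
      (CostructuredArrow.hom_ext _ _
        (Grothendieck.toTransport_comp_ι_map_of_base_eq B.hom.left (base_eq F x A B))))
    (fun B g => StructuredArrow.hom_ext _ _ <|
      Grothendieck.toTransport_comp_ι_map_injective A.hom <|
        (congrArg CommaMorphism.left (StructuredArrow.w g)).trans
          (Grothendieck.toTransport_comp_ι_map_of_base_eq B.hom.left (base_eq F x A B)).symm)

end fiberToSlice

/-- Let `p : D → C` be a coCartesian fibration and `x` an object of `C`.
Then the canonical functor from the fiber `p⁻¹(x)` to the slice `D ×_C C_{/x}`,
sending `d` to `(d, 𝟙 x)`, is cofinal. -/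
theorem fiberToSlice_final (F : C ⥤ Cat) (x : C) : (fiberToSlice F x).Final := by
  have (A : CostructuredArrow (Grothendieck.forget F) x) :
      HasInitial (StructuredArrow A (fiberToSlice F x)) :=
    (fiberToSlice.isInitialPushforward F x A).hasInitial
  exact Functor.final_of_adjunction (adjunctionOfStructuredArrowInitials _)
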